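/- arXiv:2008.08935 — 2 statements merged into one kernel-verified Lean document; each statement's English description precedes it below -/
import Mathlib

section
/- Let V be a bounded invertible linear operator on H = ℓ²(ℕ, ℂ). If s ∈ ℝ is such that for all t ∈ ℝ one has U_t ∘ V ∘ U_{−t} = e^{−ist}·V, then s = 0. (In particular, taking V = e^{isT} with T self-adjoint, the Weyl commutation relation between the number operator and any self-adjoint operator fails for every s ≠ 0.) -/
/-! Since `U_t` fixes `e₀`, the relation makes `V e₀` an eigenvector of `N` for the eigenvalue
`-s`: a nonzero coordinate `m` of `V e₀` forces `e^{i(m+s)t} = 1` for all `t`, so `s = -m ≤ 0`.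
The inverse `V⁻¹` satisfies the same relation with `-s` in place of `s`, whence also `s ≥ 0`. -/

noncomputable section

open Complex
open scoped ENNReal NNReal

namespace GW

/-- The Hilbert space `H = ℓ²(ℕ, ℂ)`. -/
abbrev H : Type := lp (fun _ : ℕ => ℂ) 2

/-- The domain of the number operator: `{f ∈ H : Σ n² |c_n|² < ∞}`. -/
def domN : Set H := {f : H | Summable fun n : ℕ => (n : ℝ) ^ 2 * ‖f n‖ ^ 2}

lemma Nop_memℓp {f : H} (hf : f ∈ domN) : Memℓp (fun n : ℕ => (n : ℂ) * f n) 2 := by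
  apply memℓp_gen
  refine Summable.congr hf fun n => ?_
  have h2 : ((2 : ℝ≥0∞)).toReal = ((2 : ℕ) : ℝ) := by norm_num
  rw [h2, Real.rpow_natCast]
  simp [norm_mul, mul_pow]

/-- The number operator `N`, defined on its maximal domain `domN`: `(Nf)_n = n·c_n`. -/
def Nop (f : H) (hf : f ∈ domN) : H := ⟨fun n : ℕ => (n : ℂ) * f n, Nop_memℓp hf⟩

/-- The standard orthonormal basis `(e_n)` of `H`. -/
def eH (n : ℕ) : H := lp.single 2 n (1 : ℂ)

lemma norm_exp_mul (x : ℝ) (c : ℂ) : ‖Complex.exp ((x : ℂ) * Complex.I) * c‖ = ‖c‖ := by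
  rw [norm_mul, Complex.norm_exp_ofReal_mul_I, one_mul]

lemma U_memℓp (t : ℝ) (f : H) : Memℓp (fun n : ℕ => Complex.exp (((n * t : ℝ) : ℂ) * Complex.I) * f n) 2 := by
  apply memℓp_gen
  refine Summable.congr ((lp.memℓp f).summable (by norm_num)) fun n => ?_
  rw [norm_exp_mul]

/-- The unitary group `U_t = e^{itN}`: `(U_t f)_n = e^{int} f_n`, as a linear map. -/
def Ulin (t : ℝ) : H →ₗ[ℂ] H where
  toFun f := ⟨fun n : ℕ => Complex.exp (((n * t : ℝ) : ℂ) * Complex.I) * f n, U_memℓp t f⟩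
  map_add' f g := by
    apply Subtype.ext
    funext n
    show Complex.exp _ * (⇑(f + g)) n = _
    rw [lp.coeFn_add]
    show Complex.exp _ * (f n + g n) =
      Complex.exp _ * f n + Complex.exp _ * g n
    ring
  map_smul' c f := by
    apply Subtype.ext
    funext n
    show Complex.exp _ * (⇑(c • f)) n = _
    rw [lp.coeFn_smul]
    show Complex.exp _ * (c * f n) = c * (Complex.exp _ * f n)
    ring

/-- The unitary group `U_t = e^{itN}`: `(U_t f)_n = e^{int} f_n`. -/
def U (t : ℝ) : H →L[ℂ] H :=
  LinearMap.mkContinuousOfExistsBound (Ulin t)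
    ⟨1, fun f => by
      simp only [Ulin, LinearMap.coe_mk, AddHom.coe_mk, one_mul]
      apply le_of_eq
      rw [lp.norm_eq_tsum_rpow (by norm_num : 0 < (2 : ℝ≥0∞).toReal),
        lp.norm_eq_tsum_rpow (by norm_num : 0 < (2 : ℝ≥0∞).toReal) f]
      congr 1
      refine tsum_congr fun n => ?_
      show ‖Complex.exp (((n * t : ℝ) : ℂ) * Complex.I) * f n‖ ^ (2 : ℝ≥0∞).toReal = _
      rw [norm_exp_mul]⟩

lemma U_apply (t : ℝ) (f : H) (n : ℕ) :
    U t f n = Complex.exp (((n * t : ℝ) : ℂ) * Complex.I) * f n := rfl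

lemma U_neg_apply_U (t : ℝ) (f : H) : U (-t) (U t f) = f := by
  ext n
  rw [U_apply, U_apply, ← mul_assoc, ← Complex.exp_add]
  convert one_mul (f n)
  rw [Complex.exp_eq_one_iff]
  exact ⟨0, by push_cast; ring⟩

lemma U_apply_eH_zero (t : ℝ) : U t (eH 0) = eH 0 := by
  ext n
  rw [U_apply]
  rcases eq_or_ne n 0 with rfl | hn
  · simp
  · rw [eH, lp.single_apply_ne 2 0 _ hn, mul_zero]

lemma eH_ne_zero (n : ℕ) : eH n ≠ 0 := fun h => by
  simpa [eH] using congrArg (fun f : H => f n) h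

lemma eq_zero_of_forall_exp_mul_I_eq_one {a : ℝ}
    (ha : ∀ t : ℝ, Complex.exp (((a * t : ℝ) : ℂ) * Complex.I) = 1) : a = 0 := by
  by_contra h
  have := ha (Real.pi / a)
  rw [mul_div_cancel₀ _ h, Complex.exp_pi_mul_I] at this
  norm_num at this

/-- `W` maps the `N`-eigenspace for `n` into the one for `n - s`. -/
def WeylCovariant (s : ℝ) (W : H → H) : Prop :=
  ∀ (t : ℝ) (f : H), U t (W f) = Complex.exp (-(Complex.I * (s : ℂ) * (t : ℂ))) • W (U t f)

lemma weylCovariant_of_conj {W : H →L[ℂ] H} {s : ℝ}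
    (h : ∀ t : ℝ, U t ∘L W ∘L U (-t) = Complex.exp (-(Complex.I * (s : ℂ) * (t : ℂ))) • W) :
    WeylCovariant s W := fun t f => by
  simpa [U_neg_apply_U] using DFunLike.congr_fun (h t) (U t f)

lemma WeylCovariant.symm {V : H ≃L[ℂ] H} {s : ℝ} (hV : WeylCovariant s V) :
    WeylCovariant (-s) V.symm := fun t f => by
  have key := congrArg V.symm (hV t (V.symm f))
  rw [V.apply_symm_apply, map_smul, V.symm_apply_apply] at key
  rw [key, smul_smul, ← Complex.exp_add]
  push_cast
  ring_nf
  rw [Complex.exp_zero, one_smul]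

lemma WeylCovariant.nonpos {W : H → H} {s : ℝ} (hW : WeylCovariant s W)
    (h0 : W (eH 0) ≠ 0) : s ≤ 0 := by
  obtain ⟨m, hm⟩ : ∃ m : ℕ, W (eH 0) m ≠ 0 := by
    by_contra! hc
    exact h0 (lp.ext (funext hc))
  have hexp : ∀ t : ℝ, Complex.exp ((((m : ℝ) + s) * t : ℝ) * Complex.I) = 1 := fun t => by
    have hcoord := congrArg (fun f : H => f m) (hW t (eH 0))
    simp only [U_apply_eH_zero, U_apply, lp.coeFn_smul, Pi.smul_apply, smul_eq_mul] at hcoord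
    have hphase := mul_right_cancel₀ hm hcoord
    rw [show ((((m : ℝ) + s) * t : ℝ) : ℂ) * Complex.I
        = ((m * t : ℝ) : ℂ) * Complex.I - -(Complex.I * (s : ℂ) * (t : ℂ)) by push_cast; ring,
      Complex.exp_sub, hphase, div_self (Complex.exp_ne_zero _)]
  have hms := eq_zero_of_forall_exp_mul_I_eq_one hexp
  linarith [(m.cast_nonneg : (0 : ℝ) ≤ m)]

/-- Let `V` be a bounded invertible linear operator on `H = ℓ²(ℕ,ℂ)`. If
`s ∈ ℝ` is such that for all `t ∈ ℝ` one has `U_t ∘ V ∘ U_{−t} = e^{−ist}·V`, then `s = 0`. -/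
theorem weyl_relation_fails_invertible (V : H ≃L[ℂ] H) (s : ℝ)
    (h : ∀ t : ℝ,
      (U t) ∘L (V : H →L[ℂ] H) ∘L (U (-t)) =
        Complex.exp (-(Complex.I * (s : ℂ) * (t : ℂ))) • (V : H →L[ℂ] H)) :
    s = 0 := by
  have hV : WeylCovariant s V := weylCovariant_of_conj h
  have hs : s ≤ 0 := hV.nonpos (by simpa using eH_ne_zero 0)
  have hs' : -s ≤ 0 := hV.symm.nonpos (by simpa using eH_ne_zero 0)
  linarith

end GW
end
end

section
/- There is no bounded linear operator T on H = ℓ²(ℕ, ℂ) with the following two properties: (i) T maps D(N) into D(N); (ii) TNf − NTf = i·f for all f ∈ D(N). -/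
noncomputable section

open Complex
open scoped ENNReal NNReal

namespace GW

/-
The vacuum `e₀` spans the kernel of `N`, while every vector in the range of `N` has vanishing
`0`-th coordinate. Applying the commutation relation to `e₀` therefore gives `-N(T e₀) = i e₀`,
whose `0`-th coordinate reads `0 = i`.
-/

@[simp]
lemma Nop_apply {f : H} (hf : f ∈ domN) (n : ℕ) : Nop f hf n = n * f n := rfl

lemma Nop_apply_zero {f : H} (hf : f ∈ domN) : Nop f hf 0 = 0 := by
  simp

lemma eH_apply (m n : ℕ) : eH m n = if n = m then 1 else 0 := by
  simp [eH, lp.single_apply, Pi.single_apply]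

lemma eH_mem_domN (m : ℕ) : eH m ∈ domN :=
  summable_of_ne_finset_zero (s := {m}) fun n hn => by
    simp [eH_apply, Finset.mem_singleton.not.mp hn]

lemma Nop_eH (m : ℕ) : Nop (eH m) (eH_mem_domN m) = (m : ℂ) • eH m := by
  ext n
  simp only [Nop_apply, lp.coeFn_smul, Pi.smul_apply, smul_eq_mul, eH_apply]
  split_ifs with h <;> simp [h]

/-- There is no bounded linear operator `T` on `H = ℓ²(ℕ,ℂ)` such that
(i) `T` maps `D(N)` into `D(N)` and (ii) `TNf − NTf = i·f` for all `f ∈ D(N)`. -/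
theorem no_bounded_heisenberg_partner :
    ¬ ∃ (T : H →L[ℂ] H) (hT : ∀ f ∈ domN, T f ∈ domN),
        ∀ (f : H) (hf : f ∈ domN),
          T (Nop f hf) - Nop (T f) (hT f hf) = Complex.I • f := by
  rintro ⟨T, hT, hcomm⟩
  have hvac : T (Nop (eH 0) (eH_mem_domN 0)) - Nop (T (eH 0)) (hT _ (eH_mem_domN 0)) =
      Complex.I • eH 0 := hcomm _ _
  rw [Nop_eH, Nat.cast_zero, zero_smul, map_zero, zero_sub] at hvac
  have hcoord := congrArg (· 0) hvac
  simp only [lp.coeFn_neg, Pi.neg_apply, Nop_apply_zero, lp.coeFn_smul, Pi.smul_apply,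
    eH_apply, ↓reduceIte, smul_eq_mul, mul_one, neg_zero] at hcoord
  exact Complex.I_ne_zero hcoord.symm

end GW
end
end
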